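/- arXiv:1902.02696 — 4 statements merged into one kernel-verified Lean document; each statement's English description precedes it below -/
import Mathlib

section
/- For a marked Petri net 𝒩 = (N, m₀), the set of markings that mark every initially marked trap of 𝒩 (the trap invariant) is an invariant of 𝒩: it contains m₀ and is closed under the firing relation. -/
/-- Edges `E(x,y)` are coded by `Esp : S → T → Bool` (place-to-transition) and
`Eps : T → S → Bool` (transition-to-place). -/
def IsTrap {S T : Type*} (Esp : S → T → Bool) (Eps : T → S → Bool) (W : Set S) : Prop :=
  ∀ t : T, (∃ s ∈ W, Esp s t = true) → ∃ s ∈ W, Eps t s = true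

/-- `t` is enabled in marking `m` iff every place of `pre t` carries a token. -/
def Enabled {S T : Type*} (Esp : S → T → Bool) (m : S → ℕ) (t : T) : Prop :=
  ∀ s : S, Esp s t = true → 0 < m s

/-- The firing relation `m →t m'`. -/
def Fires {S T : Type*} (Esp : S → T → Bool) (Eps : T → S → Bool)
    (m : S → ℕ) (t : T) (m' : S → ℕ) : Prop :=
  Enabled Esp m t ∧
    ∀ s : S, m' s = m s - (if Esp s t then 1 else 0) + (if Eps t s then 1 else 0)

/-- `m` marks `W` iff some place of `W` carries a token. -/
def Marks {S : Type*} (m : S → ℕ) (W : Set S) : Prop := ∃ s ∈ W, 0 < m s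


/-- An initially marked trap (IMT) of the marked Petri net `(N, m₀)`. -/
def IMT {S T : Type*} (Esp : S → T → Bool) (Eps : T → S → Bool)
    (m₀ : S → ℕ) (W : Set S) : Prop :=
  IsTrap Esp Eps W ∧ Marks m₀ W

/-- The trap invariant: markings that mark every initially marked trap. -/
def TrapInv {S T : Type*} (Esp : S → T → Bool) (Eps : T → S → Bool)
    (m₀ : S → ℕ) : Set (S → ℕ) :=
  {m | ∀ W : Set S, IMT Esp Eps m₀ W → Marks m W}

section

variable {S T : Type*} {Esp : S → T → Bool} {Eps : T → S → Bool} {m m' : S → ℕ} {t : T} {s : S}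

theorem Fires.pos_of_post (hfire : Fires Esp Eps m t m') (hs : Eps t s = true) : 0 < m' s := by
  rw [hfire.2 s, if_pos hs]
  omega

theorem Fires.pos_of_not_pre (hfire : Fires Esp Eps m t m') (hs : Esp s t = false)
    (hm : 0 < m s) : 0 < m' s := by
  rw [hfire.2 s, hs]
  simp only [Bool.false_eq_true, if_false, Nat.sub_zero]
  omega

/-- A token in the trap either survives the firing, or is consumed by a transition that,
`W` being a trap, puts a token back into `W`. -/
theorem IsTrap.marks_of_fires {W : Set S} (hW : IsTrap Esp Eps W)
    (hfire : Fires Esp Eps m t m') (hm : Marks m W) : Marks m' W := by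
  obtain ⟨s, hsW, hs⟩ := hm
  cases hpre : Esp s t
  · exact ⟨s, hsW, hfire.pos_of_not_pre hpre hs⟩
  · obtain ⟨s', hs'W, hpost⟩ := hW t ⟨s, hsW, hpre⟩
    exact ⟨s', hs'W, hfire.pos_of_post hpost⟩

theorem self_mem_trapInv (m₀ : S → ℕ) : m₀ ∈ TrapInv Esp Eps m₀ :=
  fun _ hW => hW.2

theorem mem_trapInv_of_fires {m₀ : S → ℕ} (hm : m ∈ TrapInv Esp Eps m₀)
    (hfire : Fires Esp Eps m t m') : m' ∈ TrapInv Esp Eps m₀ :=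
  fun W hW => hW.1.marks_of_fires hfire (hm W hW)

end

/-- The trap invariant of a marked Petri net is an invariant:
it contains the initial marking and is closed under the firing relation. -/
theorem stmt2 {S T : Type*} (Esp : S → T → Bool) (Eps : T → S → Bool) (m₀ : S → ℕ) :
    m₀ ∈ TrapInv Esp Eps m₀ ∧
    ∀ (m : S → ℕ) (t : T) (m' : S → ℕ),
      m ∈ TrapInv Esp Eps m₀ → Fires Esp Eps m t m' → m' ∈ TrapInv Esp Eps m₀ :=
  ⟨self_mem_trapInv m₀, fun _ _ _ hm hfire => mem_trapInv_of_fires hm hfire⟩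
end

section
/- Let A be a nondeterministic finite automaton over alphabet {0,1}^ℓ and let A* be its saturation, obtained by adding, for each transition (s, σ, s') of A, all transitions (s, τ, s') with σ(j) ≤ τ(j) for all 1 ≤ j ≤ ℓ. Then the minimal languages coincide: Lmin(A) = Lmin(A*), where Lmin(B) = {w ∈ L(B) | no word w' with w' ⪯ w and w' ≠ w is in L(B)}, and w₁ ⪯ w₂ iff the words have equal length and w₁ is pointwise componentwise ≤ w₂. -/
/-- A nondeterministic finite automaton over the alphabet `{0,1}^ℓ`. -/
structure NFA' (Q : Type*) (ℓ : ℕ) where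
  I : Set Q
  F : Set Q
  δ : Q → (Fin ℓ → Bool) → Q → Prop

/-- `ρ` is a run of `A` on the word `w` (only the first `w.length + 1` values
of `ρ` matter). -/
def IsRun {Q : Type*} {ℓ : ℕ} (A : NFA' Q ℓ) (w : List (Fin ℓ → Bool)) (ρ : ℕ → Q) : Prop :=
  ρ 0 ∈ A.I ∧ ∀ i (h : i < w.length), A.δ (ρ i) (w.get ⟨i, h⟩) (ρ (i + 1))

/-- Acceptance: some run ends in a final state. -/
def Accepts {Q : Type*} {ℓ : ℕ} (A : NFA' Q ℓ) (w : List (Fin ℓ → Bool)) : Prop :=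
  ∃ ρ : ℕ → Q, IsRun A w ρ ∧ ρ w.length ∈ A.F

/-- Saturation: for each transition `(s, σ, s')`, add all `(s, τ, s')` with
`σ(j) ≤ τ(j)` for every track `j`. -/
def saturate {Q : Type*} {ℓ : ℕ} (A : NFA' Q ℓ) : NFA' Q ℓ where
  I := A.I
  F := A.F
  δ := fun q τ q' => ∃ σ : Fin ℓ → Bool, A.δ q σ q' ∧ ∀ j, σ j ≤ τ j

/-- Pointwise componentwise order on words of equal length. -/
def wle {ℓ : ℕ} (w₁ w₂ : List (Fin ℓ → Bool)) : Prop :=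
  List.Forall₂ (fun a b => ∀ j, a j ≤ b j) w₁ w₂

/-- The minimal language of `B`. -/
def Lmin {Q : Type*} {ℓ : ℕ} (B : NFA' Q ℓ) : Set (List (Fin ℓ → Bool)) :=
  {w | Accepts B w ∧ ∀ w', wle w' w → w' ≠ w → ¬ Accepts B w'}

/-! Every accepting run of `A*` reads, transition by transition, a pointwise smaller word along
which the same states form an accepting run of `A`; conversely `A ⊆ A*`. So every word of
`L(A*)` lies above a word of `L(A)` and `L(A) ⊆ L(A*)`, and two languages related in this way
have the same minimal words for any partial order. -/

theorem setOf_minimal_eq_of_forall_exists_rel {α : Type*} {r : α → α → Prop} [IsTrans α r]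
    [Std.Antisymm r] {P P' : α → Prop} (hP : ∀ x, P x → P' x)
    (hP' : ∀ x, P' x → ∃ y, r y x ∧ P y) :
    {x | P x ∧ ∀ y, r y x → y ≠ x → ¬ P y} = {x | P' x ∧ ∀ y, r y x → y ≠ x → ¬ P' y} := by
  ext x
  constructor
  · rintro ⟨hx, hmin⟩
    refine ⟨hP x hx, fun y hyx hne hy => ?_⟩
    obtain ⟨z, hzy, hz⟩ := hP' y hy
    have hzx : r z x := _root_.trans hzy hyx
    obtain rfl | hzne := eq_or_ne z x
    · exact hne (antisymm hyx hzy)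
    · exact hmin z hzx hzne hz
  · rintro ⟨hx, hmin⟩
    obtain ⟨z, hzx, hz⟩ := hP' x hx
    obtain rfl : z = x := by_contra fun hne => hmin z hzx hne (hP z hz)
    exact ⟨hz, fun y hyx hne hy => hmin y hyx hne (hP y hy)⟩

section

variable {Q : Type*} {ℓ : ℕ}

theorem wle_trans {u v w : List (Fin ℓ → Bool)} (huv : wle u v) (hvw : wle v w) : wle u w := by
  induction huv generalizing w with
  | nil => exact hvw
  | cons hab _ ih =>
    cases hvw with
    | cons hbc hvw => exact .cons (fun j => (hab j).trans (hbc j)) (ih hvw)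

theorem wle_antisymm {u v : List (Fin ℓ → Bool)} (huv : wle u v) (hvu : wle v u) : u = v := by
  induction huv with
  | nil => rfl
  | cons hab _ ih =>
    cases hvu with
    | cons hba hvu => exact congrArg₂ List.cons (funext fun j => (hab j).antisymm (hba j)) (ih hvu)

instance : IsTrans (List (Fin ℓ → Bool)) wle := ⟨fun _ _ _ => wle_trans⟩

instance : Std.Antisymm (wle (ℓ := ℓ)) := ⟨fun _ _ => wle_antisymm⟩

theorem Accepts.saturate {A : NFA' Q ℓ} {w : List (Fin ℓ → Bool)} (h : Accepts A w) :
    Accepts (saturate A) w := by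
  obtain ⟨ρ, ⟨hinit, hstep⟩, hfinal⟩ := h
  exact ⟨ρ, ⟨hinit, fun i hi => ⟨_, hstep i hi, fun _ => le_rfl⟩⟩, hfinal⟩

theorem exists_wle_accepts_of_accepts_saturate {A : NFA' Q ℓ} {w : List (Fin ℓ → Bool)}
    (h : Accepts (saturate A) w) : ∃ w', wle w' w ∧ Accepts A w' := by
  obtain ⟨ρ, ⟨hinit, hstep⟩, hfinal⟩ := h
  choose σ hσ hσle using fun i : Fin w.length => hstep i i.2
  refine ⟨List.ofFn σ, ?_, ρ, ⟨hinit, fun i hi => ?_⟩, by rwa [List.length_ofFn]⟩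
  · refine List.forall₂_iff_get.mpr ⟨List.length_ofFn, fun i _ hi => ?_⟩
    simpa using hσle ⟨i, hi⟩
  · rw [List.length_ofFn] at hi
    simpa using hσ ⟨i, hi⟩

end

/-- Saturation preserves the minimal language: `Lmin(A) = Lmin(A*)`. -/
theorem stmt10 {Q : Type*} {ℓ : ℕ} (A : NFA' Q ℓ) :
    Lmin A = Lmin (saturate A) :=
  setOf_minimal_eq_of_forall_exists_rel (fun _ => Accepts.saturate)
    (fun _ => exists_wle_accepts_of_accepts_saturate)
end

section
/- Booleanization commutes with dualization: for any WS1S formula φ in negation normal form and any n > 0, the propositional formulas B_n(dual(φ)) and dual(B_n(φ)) are logically equivalent, where dual on WS1S is as defined (swapping ∧/∨, ∃/∀, negating set-variable literals, leaving predicate literals unchanged) and dual on propositional formulas swaps ∧ and ∨ leaving literals unchanged. -/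
/-! Structural induction on `φ`. Booleanization is compositional, so the
connective cases are immediate; a negated equality or set-membership literal
booleanizes to the complemented constant, which is what `PF.dual` does to
constants; and quantifiers unfold to `bigOr`/`bigAnd` over the same finite
list, which `PF.dual` swaps. -/

inductive WTerm
  | zero
  | fvar (x : ℕ)
  | succ (t : WTerm)

/-- Ground index of a term under a ground environment `e`. -/
def WTerm.gidx (e : ℕ → ℕ) : WTerm → ℕ
  | .zero => 0
  | .fvar x => e x
  | .succ t => t.gidx e + 1

/-- WS1S formulas in negation normal form. -/
inductive WForm
  | eq (t₁ t₂ : WTerm)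
  | ne (t₁ t₂ : WTerm)
  | pr (p : ℕ) (t : WTerm)
  | npr (p : ℕ) (t : WTerm)
  | sv (X : ℕ) (t : WTerm)
  | nsv (X : ℕ) (t : WTerm)
  | and (a b : WForm)
  | or (a b : WForm)
  | exF (x : ℕ) (a : WForm)
  | allF (x : ℕ) (a : WForm)
  | exS (X : ℕ) (a : WForm)
  | allS (X : ℕ) (a : WForm)

/-- WS1S dualization: swap `∧`/`∨` and `∃`/`∀`, negate equality and
set-variable literals, leave predicate literals unchanged. -/
def WForm.dual : WForm → WForm
  | .eq t₁ t₂ => .ne t₁ t₂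
  | .ne t₁ t₂ => .eq t₁ t₂
  | .pr p t => .pr p t
  | .npr p t => .npr p t
  | .sv X t => .nsv X t
  | .nsv X t => .sv X t
  | .and a b => .or a.dual b.dual
  | .or a b => .and a.dual b.dual
  | .exF x a => .allF x a.dual
  | .allF x a => .exF x a.dual
  | .exS X a => .allS X a.dual
  | .allS X a => .exS X a.dual

/-- Propositional formulas over variables `(predicate symbol, position)`. -/
inductive PF
  | const (b : Bool)
  | pvar (v : ℕ × ℕ)
  | and (f g : PF)
  | or (f g : PF)
  | not (f : PF)

def PF.Sat (β : ℕ × ℕ → Prop) : PF → Prop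
  | .const b => b = true
  | .pvar v => β v
  | .and f g => f.Sat β ∧ g.Sat β
  | .or f g => f.Sat β ∨ g.Sat β
  | .not f => ¬ f.Sat β

/-- Propositional dualization: swap `∧`/`∨`, leave literals unchanged
(constants are complemented). -/
def PF.dual : PF → PF
  | .const b => .const (!b)
  | .pvar v => .pvar v
  | .and f g => .or f.dual g.dual
  | .or f g => .and f.dual g.dual
  | .not f => .not f.dual

def bigOr (l : List PF) : PF := l.foldr PF.or (PF.const false)
def bigAnd (l : List PF) : PF := l.foldr PF.and (PF.const true)

/-- Truth value of the ground equality `s^i(0̄) = s^j(0̄)` over `[n]`. -/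
def eqB (n i j : ℕ) : Bool := decide (i = j ∨ (n - 1 ≤ i ∧ n - 1 ≤ j))

/-- Booleanization `B_n` for NNF WS1S formulas (universal quantifiers unfold to
finite conjunctions). -/
def boolize (n : ℕ) : WForm → (ℕ → ℕ) → (ℕ → List ℕ) → PF
  | .eq t₁ t₂, e, _ => .const (eqB n (t₁.gidx e) (t₂.gidx e))
  | .ne t₁ t₂, e, _ => .const (!eqB n (t₁.gidx e) (t₂.gidx e))
  | .pr p t, e, _ => .pvar (p, min (t.gidx e) (n - 1))
  | .npr p t, e, _ => .not (.pvar (p, min (t.gidx e) (n - 1)))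
  | .sv X t, e, E => .const ((E X).any (fun i => eqB n (t.gidx e) i))
  | .nsv X t, e, E => .const (!(E X).any (fun i => eqB n (t.gidx e) i))
  | .and a b, e, E => .and (boolize n a e E) (boolize n b e E)
  | .or a b, e, E => .or (boolize n a e E) (boolize n b e E)
  | .exF x a, e, E =>
      bigOr ((List.range n).map (fun i => boolize n a (Function.update e x i) E))
  | .allF x a, e, E =>
      bigAnd ((List.range n).map (fun i => boolize n a (Function.update e x i) E))
  | .exS X a, e, E =>
      bigOr ((List.range n).sublists.map (fun S => boolize n a e (Function.update E X S)))
  | .allS X a, e, E =>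
      bigAnd ((List.range n).sublists.map (fun S => boolize n a e (Function.update E X S)))

namespace PF

variable {β : ℕ × ℕ → Prop}

theorem sat_bigAnd (l : List PF) : (bigAnd l).Sat β ↔ ∀ f ∈ l, f.Sat β := by
  induction l with
  | nil => simp [bigAnd, Sat]
  | cons f l ih => simp_all [bigAnd, Sat]

theorem sat_bigOr (l : List PF) : (bigOr l).Sat β ↔ ∃ f ∈ l, f.Sat β := by
  induction l with
  | nil => simp [bigOr, Sat]
  | cons f l ih => simp_all [bigOr, Sat]

theorem dual_bigOr (l : List PF) : (bigOr l).dual = bigAnd (l.map dual) := by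
  induction l with
  | nil => rfl
  | cons f l ih => simp_all [bigOr, bigAnd, dual]

theorem dual_bigAnd (l : List PF) : (bigAnd l).dual = bigOr (l.map dual) := by
  induction l with
  | nil => rfl
  | cons f l ih => simp_all [bigOr, bigAnd, dual]

theorem sat_bigAnd_map_congr {α : Type*} {l : List α} {f g : α → PF}
    (h : ∀ a ∈ l, (f a).Sat β ↔ (g a).Sat β) :
    (bigAnd (l.map f)).Sat β ↔ (bigAnd (l.map g)).Sat β := by
  simp only [sat_bigAnd, List.forall_mem_map]
  exact forall₂_congr fun a ha => h a ha

theorem sat_bigOr_map_congr {α : Type*} {l : List α} {f g : α → PF}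
    (h : ∀ a ∈ l, (f a).Sat β ↔ (g a).Sat β) :
    (bigOr (l.map f)).Sat β ↔ (bigOr (l.map g)).Sat β := by
  simp only [sat_bigOr, List.mem_map, exists_exists_and_eq_and]
  exact exists_congr fun a => and_congr_right (h a)

end PF

theorem stmt14_general (n : ℕ) (φ : WForm) (e : ℕ → ℕ) (E : ℕ → List ℕ) :
    ∀ β : ℕ × ℕ → Prop,
      (boolize n φ.dual e E).Sat β ↔ (boolize n φ e E).dual.Sat β := by
  intro β
  induction φ generalizing e E with
  | and a b iha ihb | or a b iha ihb =>
    simp only [WForm.dual, boolize, PF.dual, PF.Sat, iha, ihb]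
  | exF _ a ih | exS _ a ih =>
    simp only [WForm.dual, boolize, PF.dual_bigOr, List.map_map]
    exact PF.sat_bigAnd_map_congr fun _ _ => ih _ _
  | allF _ a ih | allS _ a ih =>
    simp only [WForm.dual, boolize, PF.dual_bigAnd, List.map_map]
    exact PF.sat_bigOr_map_congr fun _ _ => ih _ _
  | _ => simp [WForm.dual, boolize, PF.dual, PF.Sat]

/-- Booleanization commutes with dualization: `B_n(dual φ)` and `dual(B_n φ)`
are logically equivalent propositional formulas. -/
theorem stmt14 (n : ℕ) (hn : 0 < n) (φ : WForm) (e : ℕ → ℕ) (E : ℕ → List ℕ) :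
    ∀ β : ℕ × ℕ → Prop,
      (boolize n φ.dual e E).Sat β ↔ (boolize n φ e E).dual.Sat β :=
  stmt14_general n φ e E
end

section
/- In the 3-component alternating dining philosophers Petri net instance (forks 0,1,2 with states f/b, one right-left philosopher at position 0 with states w, h, e, and two left-right philosophers at positions 1, 2 with states w, h, e, with transitions as specified), every nonempty trap contains at least one of the places b(0), h(0), b(1), w(1), f(2), e(2). Consequently the deadlock configuration {b(0), h(0), b(1), w(1), f(2), e(2)} marks every nonempty initially marked trap. -/
/-- Places of the 3-component alternating dining philosophers net:
fork `k` has states `f k`, `b k`; philosopher `i` has states `w i`, `h i`, `e i`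
(philosopher `0` is of type right-left, philosophers `1`, `2` of type left-right). -/
inductive P18
  | f (i : Fin 3)
  | b (i : Fin 3)
  | w (i : Fin 3)
  | h (i : Fin 3)
  | e (i : Fin 3)
  deriving DecidableEq

open P18

/-- The transitions as pairs (pre-set, post-set). -/
def trans18 : List (Set P18 × Set P18) :=
  [ -- philosopher 0 (right-left):
    ({w 0, f 1}, {h 0, b 1}),                 -- gr
    ({h 0, f 0}, {e 0, b 0}),                 -- gl
    ({e 0, b 0, b 1}, {w 0, f 0, f 1}),       -- put
    -- philosopher 1 (left-right):
    ({w 1, f 1}, {h 1, b 1}),                 -- gl_1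
    ({h 1, f 2}, {e 1, b 2}),                 -- gr_1
    ({e 1, b 1, b 2}, {w 1, f 1, f 2}),       -- put_1
    -- philosopher 2 (left-right):
    ({w 2, f 2}, {h 2, b 2}),                 -- gl_2
    ({h 2, f 0}, {e 2, b 0}),                 -- gr_2
    ({e 2, b 2, b 0}, {w 2, f 2, f 0}) ]      -- put_2

/-- Trap property. -/
def IsTrap18 (W : Set P18) : Prop :=
  ∀ pp ∈ trans18, (∃ s ∈ pp.1, s ∈ W) → ∃ s ∈ pp.2, s ∈ W

/-- The deadlock configuration, as a list of places. -/
def deadlock18 : List P18 := [b 0, h 0, b 1, w 1, f 2, e 2]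

/-- The deadlock marking: one token on each place of the deadlock configuration. -/
def mDead : P18 → ℕ := fun s => if s ∈ deadlock18 then 1 else 0

/-!
The complement of a trap is closed backwards: a transition whose post-set misses the trap has
its pre-set outside the trap too. Starting from the six deadlock places and firing this rule
along `gr`, `gr_2`, `put_1`, `gr_1`, `put`, `gl_2` reaches every place, so a trap avoiding the
deadlock configuration is empty.
-/

theorem IsTrap18.pre_subset_compl {W : Set P18} (hW : IsTrap18 W) {pre post : Set P18}
    (ht : (pre, post) ∈ trans18) (hpost : post ⊆ Wᶜ) : pre ⊆ Wᶜ := fun s hs hsW =>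
  let ⟨_, hs', hs'W⟩ := hW _ ht ⟨s, hs, hsW⟩
  hpost hs' hs'W

theorem IsTrap18.eq_empty_of_forall_notMem_deadlock {W : Set P18} (hW : IsTrap18 W)
    (hD : ∀ s ∈ W, s ∉ deadlock18) : W = ∅ := by
  have hDead : {b 0, h 0, b 1, w 1, f 2, e 2} ⊆ Wᶜ := fun s hs hsW =>
    hD s hsW (by simpa [deadlock18] using hs)
  simp only [Set.insert_subset_iff, Set.singleton_subset_iff] at hDead
  obtain ⟨hb0, hh0, hb1, hw1, hf2, he2⟩ := hDead
  have step (pre post : Set P18) (ht : (pre, post) ∈ trans18) (hpost : post ⊆ Wᶜ) :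
      pre ⊆ Wᶜ := hW.pre_subset_compl ht hpost
  obtain ⟨hw0, hf1⟩ := Set.pair_subset_iff.mp <|
    step {w 0, f 1} {h 0, b 1} (by simp [trans18]) (Set.pair_subset hh0 hb1)
  obtain ⟨hh2, hf0⟩ := Set.pair_subset_iff.mp <|
    step {h 2, f 0} {e 2, b 0} (by simp [trans18]) (Set.pair_subset he2 hb0)
  obtain ⟨he1, hb12⟩ := Set.insert_subset_iff.mp <|
    step {e 1, b 1, b 2} {w 1, f 1, f 2} (by simp [trans18])
      (Set.insert_subset hw1 (Set.pair_subset hf1 hf2))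
  obtain ⟨-, hb2⟩ := Set.pair_subset_iff.mp hb12
  obtain ⟨hh1, -⟩ := Set.pair_subset_iff.mp <|
    step {h 1, f 2} {e 1, b 2} (by simp [trans18]) (Set.pair_subset he1 hb2)
  obtain ⟨he0, -⟩ := Set.insert_subset_iff.mp <|
    step {e 0, b 0, b 1} {w 0, f 0, f 1} (by simp [trans18])
      (Set.insert_subset hw0 (Set.pair_subset hf0 hf1))
  obtain ⟨hw2, -⟩ := Set.pair_subset_iff.mp <|
    step {w 2, f 2} {h 2, b 2} (by simp [trans18]) (Set.pair_subset hh2 hb2)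
  refine Set.eq_empty_of_forall_notMem fun s => ?_
  rcases s with i | i | i | i | i <;> fin_cases i <;> assumption

theorem IsTrap18.exists_mem_deadlock {W : Set P18} (hW : IsTrap18 W) (hne : W.Nonempty) :
    ∃ s ∈ W, s ∈ deadlock18 := by
  by_contra! hD
  exact hne.ne_empty (hW.eq_empty_of_forall_notMem_deadlock hD)

theorem mDead_pos_iff {s : P18} : 0 < mDead s ↔ s ∈ deadlock18 := by
  by_cases hs : s ∈ deadlock18 <;> simp [mDead, hs]

/-- Every nonempty trap contains one of the places `b 0, h 0, b 1, w 1, f 2, e 2`;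
consequently the deadlock configuration marks every nonempty (in particular every
nonempty initially marked) trap. -/
theorem stmt18 :
    (∀ W : Set P18, IsTrap18 W → W.Nonempty → ∃ s ∈ W, s ∈ deadlock18) ∧
    (∀ W : Set P18, IsTrap18 W → W.Nonempty → ∃ s ∈ W, 0 < mDead s) := by
  refine ⟨fun W hW hne => hW.exists_mem_deadlock hne, fun W hW hne => ?_⟩
  obtain ⟨s, hsW, hsD⟩ := hW.exists_mem_deadlock hne
  exact ⟨s, hsW, mDead_pos_iff.mpr hsD⟩
end
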